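/- If a directed graph G admits a b-fold coloring in which every vertex's closed in-neighborhood uses at most C distinct colors in total, and w₁,…,w_m ∈ Fᶜ are vectors with every C-subset linearly independent, then assigning each vertex the b vectors indexed by its color set yields: for every vertex j, dim span(vectors of closed in-neighborhood of j) − dim span(vectors of in-neighborhood of j) = b. -/

import Mathlib

/-! At most `C` colours occur in the closed in-neighbourhood of `j`, so the vectors `w` indexed by
them are linearly independent and each span in the statement has dimension equal to the number of
colours it uses. The colours of `j` are disjoint from those of its in-neighbours, so the two counts
differ by `(S j).card = b`. -/

open Set Submodule Module

theorem LinearIndepOn.finrank_span_image {R M ι : Type*} [Ring R] [Nontrivial R]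
    [StrongRankCondition R] [AddCommGroup M] [Module R M] {v : ι → M} {s : Set ι}
    (hv : LinearIndepOn R v s) (hs : s.Finite) : finrank R (span R (v '' s)) = s.ncard := by
  have := hs.fintype
  rw [image_eq_range, finrank_span_eq_card hv, ncard_eq_toFinset_card', toFinset_card]

theorem linearIndepOn_of_ncard_le {R M ι : Type*} [Semiring R] [AddCommMonoid M] [Module R M]
    [Fintype ι] {v : ι → M} {C : ℕ} (hC : C ≤ Fintype.card ι)
    (hv : ∀ s : Finset ι, s.card = C → LinearIndependent R (fun i : s => v i))
    {t : Set ι} (ht : t.ncard ≤ C) : LinearIndepOn R v t := by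
  classical
  obtain ⟨u, htu, -, hu⟩ := Finset.exists_subsuperset_card_eq (Finset.subset_univ t.toFinset)
    (by rwa [← ncard_eq_toFinset_card']) hC
  exact LinearIndepOn.mono (s := (u : Set ι)) (hv u hu) (by simpa using htu)

theorem finrank_span_image_eq_ncard {R M ι : Type*} [Ring R] [Nontrivial R]
    [StrongRankCondition R] [AddCommGroup M] [Module R M] [Fintype ι] {v : ι → M} {C : ℕ}
    (hC : C ≤ Fintype.card ι)
    (hv : ∀ s : Finset ι, s.card = C → LinearIndependent R (fun i : s => v i))
    {t : Set ι} (ht : t.ncard ≤ C) : finrank R (span R (v '' t)) = t.ncard :=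
  (linearIndepOn_of_ncard_le hC hv ht).finrank_span_image t.toFinite

theorem stmt_19_general {F : Type*} [Field F] {V : Type*}
    (E : V → V → Prop)
    (b C m : ℕ) (hCm : C ≤ m)
    (S : V → Finset (Fin m)) (hcard : ∀ j, (S j).card = b)
    (hdisj : ∀ i j : V, E i j ∨ E j i → Disjoint (S i) (S j))
    (hlocal : ∀ j : V,
      (⋃ i ∈ insert j {i' | E i' j}, (S i : Set (Fin m))).ncard ≤ C)
    (w : Fin m → Fin C → F)
    (hgen : ∀ s : Finset (Fin m), s.card = C →
      LinearIndependent F (fun i : s => w i)) :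
    ∀ j : V,
      Module.finrank F ↥(Submodule.span F
          (⋃ i ∈ insert j {i' | E i' j}, w '' (S i : Set (Fin m))))
        - Module.finrank F ↥(Submodule.span F
          (⋃ i ∈ {i' | E i' j}, w '' (S i : Set (Fin m)))) = b := by
  intro j
  set N := {i' | E i' j}
  have hm : C ≤ Fintype.card (Fin m) := by simpa using hCm
  have hsplit : ⋃ i ∈ insert j N, (S i : Set (Fin m)) =
      (S j : Set (Fin m)) ∪ ⋃ i ∈ N, (S i : Set (Fin m)) :=
    biUnion_insert j N _
  have hdisjoint : Disjoint (S j : Set (Fin m)) (⋃ i ∈ N, (S i : Set (Fin m))) :=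
    disjoint_iUnion₂_right.2 fun i hi => Finset.disjoint_coe.2 (hdisj i j (.inl hi)).symm
  have hN : (⋃ i ∈ N, (S i : Set (Fin m))).ncard ≤ C :=
    (ncard_le_ncard (hsplit ▸ subset_union_right) (toFinite _)).trans (hlocal j)
  rw [← image_iUnion₂, ← image_iUnion₂, finrank_span_image_eq_ncard hm hgen (hlocal j),
    finrank_span_image_eq_ncard hm hgen hN, hsplit,
    ncard_union_eq hdisjoint (toFinite _) (toFinite _), ncard_coe_finset, hcard j]
  omega

/-- If a loopless finite directed graph admits a `b`-fold coloring (each vertex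
gets a `b`-element set of colors from `{1,…,m}`, adjacent vertices get disjoint
sets) in which every closed in-neighborhood uses at most `C` distinct colors in
total, and `w₁,…,wₘ ∈ Fᶜ` are vectors with every `C`-subset linearly independent,
then assigning each vertex the `b` vectors indexed by its color set satisfies:
for every vertex `j`, `dim span(closed in-neighborhood vectors) −
dim span(in-neighborhood vectors) = b`. -/
theorem stmt_19 {F : Type*} [Field F] {V : Type*} [Fintype V]
    (E : V → V → Prop) (hloop : ∀ i, ¬ E i i)
    (b C m : ℕ) (hb : 1 ≤ b) (hbC : b ≤ C) (hCm : C ≤ m)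
    (S : V → Finset (Fin m)) (hcard : ∀ j, (S j).card = b)
    (hdisj : ∀ i j : V, E i j ∨ E j i → Disjoint (S i) (S j))
    (hlocal : ∀ j : V,
      (⋃ i ∈ insert j {i' | E i' j}, (S i : Set (Fin m))).ncard ≤ C)
    (w : Fin m → Fin C → F)
    (hgen : ∀ s : Finset (Fin m), s.card = C →
      LinearIndependent F (fun i : s => w i)) :
    ∀ j : V,
      Module.finrank F ↥(Submodule.span F
          (⋃ i ∈ insert j {i' | E i' j}, w '' (S i : Set (Fin m))))
        - Module.finrank F ↥(Submodule.span F
          (⋃ i ∈ {i' | E i' j}, w '' (S i : Set (Fin m)))) = b :=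
  stmt_19_general E b C m hCm S hcard hdisj hlocal w hgen
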